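/- arXiv:1904.04596 — 3 statements merged into one kernel-verified Lean document; each statement's English description precedes it below -/
import Mathlib

section
/- Let α ∈ ℂ with α ≠ 0 and write x = |α|². Define c' : ℕ × ℕ → ℂ by c'(j,l) = (e^{-x/2}/(1-e^{-x})) · α^{j+l} · 2^{-(j+l)/2} · √(Nat.choose (j+l) j / (j+l)!) · (1-(-1)^l) when j+l is even, and c'(j,l) = 0 when j+l is odd. Then (i) c'(j,l) = 0 whenever j is even or l is even, and (ii) Σ_{(j,l)∈ℕ×ℕ} |c'(j,l)|² = 1. (This is the statement that for the even-coherent NOON state with anti-correlated inputs x ≠ y, both parties detect an odd photon number with probability 1, i.e. P(1,1|0,1) = P(1,1|1,0) = 1; together with the correlated case this gives the maximal GYNI value 𝒥 = 1.) -/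
/-!
For `j + l` even, `|c'(j, l)|²` factors as `K² s(j) s(l)`, where `K = e^{-x/2} / (1 - e^{-x})`
and `s(n) = (1 - (-1)ⁿ) (x/2)ⁿ / n!`: this uses `C(j+l, j) / (j+l)! = 1 / (j! l!)`,
`|2^{-(j+l)/2}|² = 2^{-(j+l)}` and `(-1)^j = (-1)^l`. The `s(n)` vanish for even `n` and are the
Taylor coefficients of `2 sinh (x/2)`, so the total weight is `(2 K sinh (x/2))²`, which is `1`
because `e^{-x/2} · 2 sinh (x/2) = 1 - e^{-x}`.
-/

open scoped BigOperators

open Real Nat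

noncomputable def twoSinhCoeff (y : ℝ) (n : ℕ) : ℝ := (1 - (-1) ^ n) * y ^ n / n !

theorem hasSum_twoSinhCoeff (y : ℝ) : HasSum (twoSinhCoeff y) (2 * sinh y) := by
  have h := (NormedSpace.expSeries_div_hasSum_exp y).sub
    (NormedSpace.expSeries_div_hasSum_exp (-y))
  rw [← Real.exp_eq_exp_ℝ] at h
  have hcoeff : twoSinhCoeff y = fun n => y ^ n / (n ! : ℝ) - (-y) ^ n / (n ! : ℝ) := by
    funext n
    rw [twoSinhCoeff, neg_pow y]
    ring
  rwa [hcoeff, sinh_eq, mul_div_cancel₀ _ two_ne_zero]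

theorem twoSinhCoeff_nonneg {y : ℝ} (hy : 0 ≤ y) (n : ℕ) : 0 ≤ twoSinhCoeff y n := by
  rcases n.even_or_odd with hn | hn <;>
    simp only [twoSinhCoeff, hn.neg_one_pow] <;> positivity

theorem twoSinhCoeff_of_even (y : ℝ) {n : ℕ} (hn : Even n) : twoSinhCoeff y n = 0 := by
  simp [twoSinhCoeff, hn.neg_one_pow]

theorem HasSum.mul_of_nonneg {ι κ : Type*} {f : ι → ℝ} {g : κ → ℝ} {a b : ℝ}
    (hf : HasSum f a) (hg : HasSum g b) (hf₀ : 0 ≤ f) (hg₀ : 0 ≤ g) :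
    HasSum (fun p : ι × κ => f p.1 * g p.2) (a * b) :=
  hf.mul hg (hf.summable.mul_of_nonneg hg.summable hf₀ hg₀)

theorem sq_rpow_neg_div_two {a : ℝ} (ha : 0 ≤ a) (n : ℕ) :
    (a ^ (-(n : ℝ) / 2)) ^ 2 = (a ^ n)⁻¹ := by
  rw [← rpow_mul_natCast ha, Nat.cast_ofNat, div_mul_cancel₀ _ two_ne_zero, rpow_neg ha,
    rpow_natCast]

theorem add_choose_div_factorial (j l : ℕ) :
    ((j + l).choose j : ℝ) / (j + l)! = 1 / (j ! * l !) := by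
  rw [Nat.cast_add_choose, div_div_cancel_left' (by positivity), one_div]

theorem neg_one_pow_eq_of_even_add {R : Type*} [Monoid R] [HasDistribNeg R] {j l : ℕ}
    (h : Even (j + l)) : (-1 : R) ^ j = (-1) ^ l := by
  have hjl : Even j ↔ Even l := Nat.even_add.mp h
  rcases l.even_or_odd with hl | hl
  · rw [(hjl.mpr hl).neg_one_pow, hl.neg_one_pow]
  · have hj : Odd j := Nat.not_even_iff_odd.mp (hjl.not.mpr (Nat.not_even_iff_odd.mpr hl))
    rw [hj.neg_one_pow, hl.neg_one_pow]

theorem exp_neg_half_div_mul_two_sinh_half {x : ℝ} (hx : x ≠ 0) :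
    exp (-x / 2) / (1 - exp (-x)) * (2 * sinh (x / 2)) = 1 := by
  have h : 1 - exp (-x) ≠ 0 := by
    rw [sub_ne_zero, ne_comm, Ne, Real.exp_eq_one_iff, neg_eq_zero]
    exact hx
  rw [div_mul_eq_mul_div, div_eq_one_iff_eq h, sinh_eq, mul_div_cancel₀ _ two_ne_zero,
    mul_sub, ← exp_add, ← exp_add]
  ring_nf
  rw [exp_zero]

theorem norm_sq_noonCoeff_eq (K : ℝ) (α : ℂ) {j l : ℕ} (h : Even (j + l)) :
    ‖(K : ℂ) * α ^ (j + l) * (((2 : ℝ) ^ (-((j + l : ℕ) : ℝ) / 2) : ℝ) : ℂ) *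
        ((√(((j + l).choose j : ℝ) / (j + l)!) : ℝ) : ℂ) * (1 - (-1 : ℂ) ^ l)‖ ^ 2 =
      K ^ 2 * (twoSinhCoeff (‖α‖ ^ 2 / 2) j * twoSinhCoeff (‖α‖ ^ 2 / 2) l) := by
  have hsign : (1 - (-1 : ℂ) ^ l) = ((1 - (-1) ^ l : ℝ) : ℂ) := by push_cast; rfl
  rw [hsign, add_choose_div_factorial]
  simp only [norm_mul, norm_pow, Complex.norm_real, Real.norm_eq_abs, mul_pow, sq_abs,
    sq_rpow_neg_div_two zero_le_two, Real.sq_sqrt (by positivity : (0 : ℝ) ≤ 1 / (j ! * l !)),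
    twoSinhCoeff, neg_one_pow_eq_of_even_add (R := ℝ) h, div_pow, pow_add]
  field_simp
  ring

/-- For the even-coherent NOON state with anti-correlated inputs, the output Fock
coefficients vanish on even photon numbers and the state is normalized:
both parties detect an odd photon number with probability 1. -/
theorem even_coherent_NOON_anticorrelated_parity
    (α : ℂ) (hα : α ≠ 0) (x : ℝ) (hx : x = ‖α‖ ^ 2)
    (c' : ℕ × ℕ → ℂ)
    (hc_even : ∀ j l : ℕ, Even (j + l) →
      c' (j, l) = ((Real.exp (-x / 2) / (1 - Real.exp (-x)) : ℝ) : ℂ) * α ^ (j + l) *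
        (((2 : ℝ) ^ (-((j + l : ℕ) : ℝ) / 2) : ℝ) : ℂ) *
        ((Real.sqrt ((Nat.choose (j + l) j : ℝ) / (Nat.factorial (j + l) : ℝ)) : ℝ) : ℂ) *
        (1 - (-1 : ℂ) ^ l))
    (hc_odd : ∀ j l : ℕ, Odd (j + l) → c' (j, l) = 0) :
    (∀ j l : ℕ, (Even j ∨ Even l) → c' (j, l) = 0) ∧
      ∑' p : ℕ × ℕ, ‖c' p‖ ^ 2 = 1 := by
  set K := exp (-x / 2) / (1 - exp (-x))
  have hx₀ : x ≠ 0 := hx ▸ pow_ne_zero 2 (norm_ne_zero_iff.mpr hα)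
  have hvanish : ∀ j l : ℕ, (Even j ∨ Even l) → c' (j, l) = 0 := by
    intro j l hjl
    rcases (j + l).even_or_odd with h | h
    · have hsign : (-1 : ℂ) ^ l = 1 := by
        rcases hjl with hj | hl
        · rw [← neg_one_pow_eq_of_even_add h, hj.neg_one_pow]
        · exact hl.neg_one_pow
      rw [hc_even j l h, hsign, sub_self, mul_zero]
    · exact hc_odd j l h
  have hnorm : ∀ p : ℕ × ℕ,
      ‖c' p‖ ^ 2 = K ^ 2 * (twoSinhCoeff (x / 2) p.1 * twoSinhCoeff (x / 2) p.2) := by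
    rintro ⟨j, l⟩
    rcases (j + l).even_or_odd with h | h
    · rw [hc_even j l h, norm_sq_noonCoeff_eq K α h, hx]
    · rcases j.even_or_odd with hj | hj
      · rw [hvanish j l (.inl hj), twoSinhCoeff_of_even _ hj]
        simp
      · have hl : Even l := (Nat.odd_add.mp h).mp hj
        rw [hvanish j l (.inr hl), twoSinhCoeff_of_even _ hl]
        simp
  have hg₀ : 0 ≤ twoSinhCoeff (x / 2) :=
    twoSinhCoeff_nonneg (by rw [hx]; positivity)
  have hsum := ((hasSum_twoSinhCoeff (x / 2)).mul_of_nonneg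
    (hasSum_twoSinhCoeff (x / 2)) hg₀ hg₀).mul_left (K ^ 2)
  rw [← funext hnorm, ← sq, ← mul_pow, exp_neg_half_div_mul_two_sinh_half hx₀, one_pow] at hsum
  exact ⟨hvanish, hsum.tsum_eq⟩
end

section
/- Let r ∈ ℝ with r ≠ 0. Define d' : ℕ × ℕ → ℝ by d'(2k-1, 2(m-k)+1) = (1/√(2(cosh r - 1))) · (-tanh r)^m · √((2m)!) · √(Nat.choose (2m) (2k-1)) / (2^{2m-1} · m!) for all m ≥ 1 and 1 ≤ k ≤ m, and d'(j,l) = 0 whenever j or l is even. Then Σ_{(j,l)∈ℕ×ℕ} |d'(j,l)|² = 1. (This is the statement that for the squeezed-vacuum NOON state with anti-correlated inputs, both parties detect an odd photon number with probability 1, i.e. P(1,1|0,1) = P(1,1|1,0) = 1; together with the correlated case this gives the maximal GYNI value 𝒥 = 1.) -/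
/-!
With `m = a + b + 1`, the squared amplitude at `(2a+1, 2b+1)` is
`2 / (cosh r - 1) · C(2m, m) · C(2m, 2a+1) · (tanh² r / 16)^m`. Along the antidiagonal
`a + b = m - 1` the odd binomial coefficients of row `2m` sum to `2^(2m-1)`, leaving
`C(2m, m) (tanh² r / 4)^m / (cosh r - 1)`. The generating function
`∑ C(2m, m) x^m = (1 - 4x)^(-1/2)` at `x = tanh² r / 4` equals `1 / √(1 - tanh² r) = cosh r`,
so the sum over `m ≥ 1` is `(cosh r - 1) / (cosh r - 1) = 1`.
-/

open Finset

theorem Finset.sum_range_two_mul {M : Type*} [AddCommMonoid M] (f : ℕ → M) (n : ℕ) :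
    ∑ i ∈ range (2 * n), f i = ∑ i ∈ range n, (f (2 * i) + f (2 * i + 1)) := by
  induction n with
  | zero => simp
  | succ n ih =>
    rw [show 2 * (n + 1) = 2 * n + 1 + 1 by ring, sum_range_succ, sum_range_succ, ih,
      sum_range_succ, add_assoc]

theorem Nat.sum_range_choose_odd (n : ℕ) :
    ∑ a ∈ range (n + 1), (2 * n + 2).choose (2 * a + 1) = 2 ^ (2 * n + 1) := by
  calc ∑ a ∈ range (n + 1), (2 * n + 2).choose (2 * a + 1)
      = ∑ a ∈ range (n + 1), ((2 * n + 1).choose (2 * a) + (2 * n + 1).choose (2 * a + 1)) :=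
        sum_congr rfl fun a _ ↦ Nat.choose_succ_succ' _ _
    _ = ∑ i ∈ range (2 * n + 1 + 1), (2 * n + 1).choose i := by
        rw [show 2 * n + 1 + 1 = 2 * (n + 1) by ring, sum_range_two_mul]
    _ = 2 ^ (2 * n + 1) := Nat.sum_range_choose _

theorem ascPochhammer_eval_half (n : ℕ) :
    (ascPochhammer ℝ n).eval (1 / 2 : ℝ) = (2 * n).factorial / (4 ^ n * n.factorial) := by
  induction n with
  | zero => simp
  | succ n ih =>
    rw [ascPochhammer_succ_eval, ih, show 2 * (n + 1) = 2 * n + 1 + 1 by ring,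
      Nat.factorial_succ, Nat.factorial_succ, Nat.factorial_succ]
    push_cast
    field_simp
    ring

theorem Ring.multichoose_half (n : ℕ) :
    Ring.multichoose (1 / 2 : ℝ) n = n.centralBinom / 4 ^ n := by
  have h := Ring.factorial_nsmul_multichoose_eq_ascPochhammer (1 / 2 : ℝ) n
  rw [Polynomial.ascPochhammer_smeval_eq_eval, ascPochhammer_eval_half, nsmul_eq_mul] at h
  have hn : (n.factorial : ℝ) ≠ 0 := by positivity
  rw [Nat.centralBinom_eq_two_mul_choose, Nat.cast_choose ℝ (by omega : n ≤ 2 * n),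
    show 2 * n - n = n by omega]
  field_simp at h ⊢
  linarith

theorem Real.hasSum_centralBinom_mul_pow {x : ℝ} (hx : |x| < 1 / 4) :
    HasSum (fun n ↦ (n.centralBinom : ℝ) * x ^ n) (1 / √(1 - 4 * x)) := by
  have h4x : 4 * x ∈ Metric.eball (0 : ℝ) 1 := by
    rw [Metric.mem_eball, edist_zero_right, enorm_eq_nnnorm, ENNReal.coe_lt_one_iff,
      ← NNReal.coe_lt_coe, coe_nnnorm, Real.norm_eq_abs, abs_mul]
    norm_num
    linarith
  have h := (one_div_one_sub_rpow_hasFPowerSeriesOnBall_zero (1 / 2)).hasSum h4x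
  simp only [FormalMultilinearSeries.ofScalars_apply_eq, ← Ring.multichoose_eq,
    Ring.multichoose_half, zero_add, smul_eq_mul] at h
  rw [Real.sqrt_eq_rpow]
  convert h using 2 with n
  · rfl
  · rw [mul_pow]
    field_simp

theorem hasSum_of_hasSum_sum_antidiagonal {f : ℕ × ℕ → ℝ} (hf : 0 ≤ f) {a : ℝ}
    (h : HasSum (fun n ↦ ∑ p ∈ antidiagonal n, f p) a) : HasSum f a := by
  let e := Finset.HasAntidiagonal.sigmaAntidiagonalEquivProd (A := ℕ)
  rw [← e.hasSum_iff]
  have hfiber (n : ℕ) :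
      HasSum (fun p : antidiagonal n ↦ f p) (∑ p ∈ antidiagonal n, f p) := by
    simpa only [sum_coe_sort] using hasSum_fintype (fun p : antidiagonal n ↦ f p)
  refine h.sigma_of_hasSum hfiber ((summable_sigma_of_nonneg fun _ ↦ hf _).2 ?_)
  exact ⟨fun n ↦ (hfiber n).summable, h.summable.congr fun n ↦ (hfiber n).tsum_eq.symm⟩

theorem tsum_eq_tsum_odd_odd_of_eq_zero {M : Type*} [AddCommMonoid M] [TopologicalSpace M]
    {g : ℕ × ℕ → M} (hg : ∀ j l, Even j ∨ Even l → g (j, l) = 0) :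
    ∑' p, g p = ∑' q : ℕ × ℕ, g (2 * q.1 + 1, 2 * q.2 + 1) := by
  have hinj : Function.Injective fun q : ℕ × ℕ ↦ (2 * q.1 + 1, 2 * q.2 + 1) := by
    intro q q' h
    simp only [Prod.mk.injEq] at h
    exact Prod.ext (by omega) (by omega)
  refine (hinj.tsum_eq fun p hp ↦ ?_).symm
  obtain ⟨⟨a, ha⟩, ⟨b, hb⟩⟩ : Odd p.1 ∧ Odd p.2 := by
    simp only [← Nat.not_even_iff_odd, ← not_or]
    exact fun h ↦ hp (hg _ _ h)
  exact ⟨(a, b), Prod.ext ha.symm hb.symm⟩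

open Real

section

variable (r : ℝ)

/-- The coefficient of `|j⟩|2m - j⟩` in the anti-correlated output state. -/
noncomputable def oddPairAmplitude (m j : ℕ) : ℝ :=
  (1 / √(2 * (cosh r - 1))) * (-tanh r) ^ m * √((2 * m).factorial : ℝ) *
    √((2 * m).choose j : ℝ) / ((2 : ℝ) ^ (2 * (m : ℤ) - 1) * (m.factorial : ℝ))

theorem oddPairAmplitude_sq (m j : ℕ) :
    oddPairAmplitude r m j ^ 2 =
      2 / (cosh r - 1) * m.centralBinom * (tanh r ^ 2 / 4) ^ m / 4 ^ m * (2 * m).choose j := by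
  have hK : 0 ≤ 2 * (cosh r - 1) := by linarith [one_le_cosh r]
  have hpow : ((2 : ℝ) ^ (2 * (m : ℤ) - 1)) ^ 2 = 16 ^ m / 4 := by
    rw [← zpow_natCast, ← zpow_mul,
      show (2 * (m : ℤ) - 1) * (2 : ℕ) = 4 * m - 2 by push_cast; ring,
      zpow_sub₀ two_ne_zero, zpow_mul, zpow_natCast]
    norm_num
  have hfac : (m.factorial : ℝ) ≠ 0 := by positivity
  rw [oddPairAmplitude, Nat.centralBinom_eq_two_mul_choose,
    Nat.cast_choose ℝ (by omega : m ≤ 2 * m), show 2 * m - m = m by omega]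
  simp only [div_pow, mul_pow, one_pow, hpow, sq_sqrt hK, sq_sqrt (Nat.cast_nonneg _)]
  rw [← pow_mul, mul_comm m 2, pow_mul, neg_sq,
    show (16 : ℝ) ^ m = 4 ^ m * 4 ^ m by rw [← mul_pow]; norm_num]
  field_simp
  ring

theorem sum_range_oddPairAmplitude_sq (n : ℕ) :
    ∑ a ∈ range (n + 1), oddPairAmplitude r (n + 1) (2 * a + 1) ^ 2 =
      (n + 1).centralBinom * (tanh r ^ 2 / 4) ^ (n + 1) / (cosh r - 1) := by
  simp only [oddPairAmplitude_sq, ← mul_sum]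
  rw [show 2 * (n + 1) = 2 * n + 2 by ring]
  rw_mod_cast [Nat.sum_range_choose_odd,
    show 4 ^ (n + 1) = 2 * 2 ^ (2 * n + 1) by rw [pow_succ, pow_succ, pow_mul]; norm_num; ring]
  push_cast
  field_simp

theorem hasSum_centralBinom_mul_tanh_sq_div_four :
    HasSum (fun n ↦ (n.centralBinom : ℝ) * (tanh r ^ 2 / 4) ^ n) (cosh r) := by
  have hx : |tanh r ^ 2 / 4| < 1 / 4 := by
    rw [abs_of_nonneg (by positivity)]
    linarith [tanh_sq_lt_one r]
  have hcosh : 1 - 4 * (tanh r ^ 2 / 4) = (cosh r ^ 2)⁻¹ := by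
    have := cosh_sq_sub_sinh_sq r
    have := (cosh_pos r).ne'
    rw [tanh_eq_sinh_div_cosh]
    field_simp
    linarith
  simpa [hcosh, sqrt_inv, sqrt_sq (cosh_pos r).le] using hasSum_centralBinom_mul_pow hx

end

/-- For the squeezed-vacuum NOON state with anti-correlated inputs, both parties
detect an odd photon number with probability 1: the output coefficients,
supported on pairs of odd photon numbers, are normalized. -/
theorem squeezed_NOON_anticorrelated_parity
    (r : ℝ) (hr : r ≠ 0) (d' : ℕ × ℕ → ℝ)
    (hd : ∀ m k : ℕ, 1 ≤ m → 1 ≤ k → k ≤ m →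
      d' (2 * k - 1, 2 * (m - k) + 1) =
        (1 / Real.sqrt (2 * (Real.cosh r - 1))) * (-Real.tanh r) ^ m *
          Real.sqrt (Nat.factorial (2 * m) : ℝ) *
          Real.sqrt (Nat.choose (2 * m) (2 * k - 1) : ℝ) /
          ((2 : ℝ) ^ (2 * (m : ℤ) - 1) * (Nat.factorial m : ℝ)))
    (hd_even : ∀ j l : ℕ, Even j ∨ Even l → d' (j, l) = 0) :
    ∑' p : ℕ × ℕ, |d' p| ^ 2 = 1 := by
  have hfiber (n : ℕ) : ∑ p ∈ antidiagonal n, d' (2 * p.1 + 1, 2 * p.2 + 1) ^ 2 =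
      (n + 1).centralBinom * (tanh r ^ 2 / 4) ^ (n + 1) / (cosh r - 1) := by
    rw [Nat.sum_antidiagonal_eq_sum_range_succ_mk, ← sum_range_oddPairAmplitude_sq]
    refine sum_congr rfl fun a ha ↦ ?_
    have ha : a ≤ n := Nat.lt_succ_iff.1 (mem_range.1 ha)
    have hda := hd (n + 1) (a + 1) (by omega) (by omega) (by omega)
    rw [show 2 * (a + 1) - 1 = 2 * a + 1 by omega, show n + 1 - (a + 1) = n - a by omega] at hda
    rw [hda, oddPairAmplitude]
  have hcosh : cosh r - 1 ≠ 0 := sub_ne_zero.2 (one_lt_cosh.2 hr).ne'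
  have hseries := ((hasSum_nat_add_iff' 1).2
    (hasSum_centralBinom_mul_tanh_sq_div_four r)).div_const (cosh r - 1)
  simp only [range_one, sum_singleton, Nat.centralBinom_zero, pow_zero, Nat.cast_one, mul_one,
    div_self hcosh, ← hfiber] at hseries
  rw [tsum_eq_tsum_odd_odd_of_eq_zero fun j l h ↦ by simp [hd_even j l h]]
  simp only [sq_abs]
  exact (hasSum_of_hasSum_sum_antidiagonal (fun _ ↦ sq_nonneg _) hseries).tsum_eq
end

section
/- Let α ∈ ℂ, x = |α|², and define u : ℕ → ℂ by u_n = e^{-x/2} α^n/√(n!) (the coherent state coefficients), and Ψ : ℕ × ℕ → ℂ by Ψ(n,m) = u_n·[m=0] + [n=0]·u_m (the unnormalized coherent NOON state). Then the Bell correlator E := (4|Ψ(0,0)|² − 2·Σ_{m}|Ψ(0,m)|² − 2·Σ_{n}|Ψ(n,0)|² + Σ_{(n,m)}|Ψ(n,m)|²) / (Σ_{(n,m)}|Ψ(n,m)|²) equals (3e^{-x} − 1)/(1+e^{-x}). -/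
/-!
The squared coherent amplitudes `‖u n‖² = e^{-x} xⁿ / n!` form a Poisson distribution, so they
sum to `1`, with vacuum weight `‖u 0‖² = e^{-x}`. The squared amplitudes of `|u⟩|0⟩ + |0⟩|u⟩` are
one copy of this distribution on each axis of `ℕ × ℕ`, plus the interference term `2 e^{-x}` at
the origin, where both branches meet. Every sum in the correlator is therefore explicit:
`‖Ψ(0,0)‖² = 4e^{-x}`, each axis sums to `1 + 3e^{-x}` and the total is `2 + 2e^{-x}`.
-/

open scoped Nat

section AxisSums

variable {α β M : Type*} [DecidableEq β] [AddCommMonoid M] [TopologicalSpace M] {f : α → M} {a : M}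

theorem HasSum.ite_snd_eq (hf : HasSum f a) (b : β) :
    HasSum (fun p : α × β => if p.2 = b then f p.1 else 0) a := by
  have hinj : Function.Injective fun x : α => (x, b) := fun _ _ h => (Prod.ext_iff.1 h).1
  refine (hinj.hasSum_iff ?_).1 (by simpa [Function.comp_def] using hf)
  rintro ⟨x, y⟩ hxy
  simp only [ite_eq_right_iff]
  rintro rfl
  exact absurd ⟨x, rfl⟩ hxy

theorem HasSum.ite_fst_eq (hf : HasSum f a) (b : β) :
    HasSum (fun p : β × α => if p.1 = b then f p.2 else 0) a :=
  (Equiv.prodComm α β).symm.hasSum_iff.2 (hf.ite_snd_eq b)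

end AxisSums

/-- Fock amplitudes `Ψ(n, m)` of the two-mode state `|u⟩|0⟩ + |0⟩|u⟩`. -/
def noonAmp (u : ℕ → ℂ) (p : ℕ × ℕ) : ℂ :=
  u p.1 * (if p.2 = 0 then 1 else 0) + (if p.1 = 0 then 1 else 0) * u p.2

/-- `⟨M₀ ⊗ M₀⟩` with `M₀ = 2|0⟩⟨0| − I`, in the state with (unnormalized) amplitudes `Ψ`. -/
noncomputable def bellCorrelator (Ψ : ℕ × ℕ → ℂ) : ℝ :=
  (4 * ‖Ψ (0, 0)‖ ^ 2 - 2 * ∑' m : ℕ, ‖Ψ (0, m)‖ ^ 2 - 2 * ∑' n : ℕ, ‖Ψ (n, 0)‖ ^ 2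
    + ∑' p : ℕ × ℕ, ‖Ψ p‖ ^ 2) / ∑' p : ℕ × ℕ, ‖Ψ p‖ ^ 2

noncomputable def coherentAmp (α : ℂ) (n : ℕ) : ℂ :=
  ((Real.exp (-‖α‖ ^ 2 / 2) : ℝ) : ℂ) * α ^ n / ((Real.sqrt n ! : ℝ) : ℂ)

namespace noonAmp

variable {u : ℕ → ℂ} {s : ℝ}

theorem apply_swap (u : ℕ → ℂ) (p : ℕ × ℕ) : noonAmp u p.swap = noonAmp u p := by
  simp only [noonAmp, Prod.fst_swap, Prod.snd_swap]
  ring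

theorem norm_sq_apply (u : ℕ → ℂ) (p : ℕ × ℕ) :
    ‖noonAmp u p‖ ^ 2 = (if p.2 = 0 then ‖u p.1‖ ^ 2 else 0)
      + (if p.1 = 0 then ‖u p.2‖ ^ 2 else 0) + (if p = (0, 0) then 2 * ‖u 0‖ ^ 2 else 0) := by
  obtain ⟨_ | n, _ | m⟩ := p
  · simp only [noonAmp, if_true, mul_one, one_mul]
    rw [← two_mul, norm_mul, mul_pow, Complex.norm_two]
    ring
  all_goals simp [noonAmp]

theorem norm_sq_apply_zero_left (u : ℕ → ℂ) (m : ℕ) :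
    ‖noonAmp u (0, m)‖ ^ 2 = ‖u m‖ ^ 2 + if m = 0 then 3 * ‖u 0‖ ^ 2 else 0 := by
  rw [norm_sq_apply]
  rcases m with _ | m
  · simp only [if_true]
    ring
  · simp

theorem hasSum_norm_sq_zero_left (hu : HasSum (fun n => ‖u n‖ ^ 2) s) :
    HasSum (fun m => ‖noonAmp u (0, m)‖ ^ 2) (s + 3 * ‖u 0‖ ^ 2) := by
  simpa only [norm_sq_apply_zero_left] using hu.add (hasSum_ite_eq 0 (3 * ‖u 0‖ ^ 2))

theorem hasSum_norm_sq_zero_right (hu : HasSum (fun n => ‖u n‖ ^ 2) s) :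
    HasSum (fun n => ‖noonAmp u (n, 0)‖ ^ 2) (s + 3 * ‖u 0‖ ^ 2) := by
  convert hasSum_norm_sq_zero_left hu using 3 with n
  rw [← apply_swap]
  rfl

theorem hasSum_norm_sq (hu : HasSum (fun n => ‖u n‖ ^ 2) s) :
    HasSum (fun p => ‖noonAmp u p‖ ^ 2) (2 * s + 2 * ‖u 0‖ ^ 2) := by
  rw [two_mul]
  simpa only [norm_sq_apply] using
    ((hu.ite_snd_eq 0).add (hu.ite_fst_eq 0)).add (hasSum_ite_eq (0, 0) (2 * ‖u 0‖ ^ 2))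

theorem bellCorrelator_eq (hu : HasSum (fun n => ‖u n‖ ^ 2) s) :
    bellCorrelator (noonAmp u) = (3 * ‖u 0‖ ^ 2 - s) / (s + ‖u 0‖ ^ 2) := by
  have hcenter : ‖noonAmp u (0, 0)‖ ^ 2 = 4 * ‖u 0‖ ^ 2 := by
    rw [norm_sq_apply_zero_left, if_pos rfl]
    ring
  rw [bellCorrelator, hcenter, (hasSum_norm_sq_zero_left hu).tsum_eq,
    (hasSum_norm_sq_zero_right hu).tsum_eq, (hasSum_norm_sq hu).tsum_eq]
  set c := ‖u 0‖ ^ 2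
  rw [show 4 * (4 * c) - 2 * (s + 3 * c) - 2 * (s + 3 * c) + (2 * s + 2 * c) = 2 * (3 * c - s) by
    ring, show 2 * s + 2 * c = 2 * (s + c) by ring, mul_div_mul_left _ _ two_ne_zero]

end noonAmp

namespace coherentAmp

theorem norm_sq_apply (α : ℂ) (n : ℕ) :
    ‖coherentAmp α n‖ ^ 2 = Real.exp (-‖α‖ ^ 2) * (‖α‖ ^ 2) ^ n / n ! := by
  have hexp : Real.exp (-‖α‖ ^ 2 / 2) ^ 2 = Real.exp (-‖α‖ ^ 2) := by
    rw [← Real.exp_nat_mul]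
    ring_nf
  rw [coherentAmp, norm_div, norm_mul, norm_pow, Complex.norm_real, Complex.norm_real,
    Real.norm_of_nonneg (Real.exp_pos _).le, Real.norm_of_nonneg (Real.sqrt_nonneg _), div_pow,
    mul_pow, hexp, Real.sq_sqrt (Nat.cast_nonneg _), ← pow_mul, mul_comm n, pow_mul]

theorem hasSum_norm_sq (α : ℂ) : HasSum (fun n => ‖coherentAmp α n‖ ^ 2) 1 := by
  have h := (NormedSpace.expSeries_div_hasSum_exp (‖α‖ ^ 2)).mul_left (Real.exp (-‖α‖ ^ 2))
  rw [← Real.exp_eq_exp_ℝ, ← Real.exp_add, neg_add_cancel, Real.exp_zero] at h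
  simpa only [norm_sq_apply, mul_div_assoc] using h

end coherentAmp

/-- The reference-frame-independent Bell correlator `⟨M₀ᴬ M₀ᴮ⟩` of the coherent
NOON state equals `N'(3e^{-x} − 1)` with `N' = 1/(1+e^{-x})`, `x = |α|²`. -/
theorem coherent_NOON_bell_correlator
    (α : ℂ) (x : ℝ) (hx : x = ‖α‖ ^ 2)
    (u : ℕ → ℂ)
    (hu : ∀ n : ℕ, u n = ((Real.exp (-x / 2) : ℝ) : ℂ) * α ^ n /
      ((Real.sqrt (Nat.factorial n) : ℝ) : ℂ))
    (Ψ : ℕ × ℕ → ℂ)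
    (hΨ : ∀ n m : ℕ, Ψ (n, m) =
      u n * (if m = 0 then 1 else 0) + (if n = 0 then 1 else 0) * u m)
    (E : ℝ)
    (hE : E = (4 * ‖Ψ (0, 0)‖ ^ 2
        - 2 * ∑' m : ℕ, ‖Ψ (0, m)‖ ^ 2
        - 2 * ∑' n : ℕ, ‖Ψ (n, 0)‖ ^ 2
        + ∑' p : ℕ × ℕ, ‖Ψ p‖ ^ 2) /
      ∑' p : ℕ × ℕ, ‖Ψ p‖ ^ 2) :
    E = (3 * Real.exp (-x) - 1) / (1 + Real.exp (-x)) := by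
  subst hx
  obtain rfl : u = coherentAmp α := funext hu
  obtain rfl : Ψ = noonAmp (coherentAmp α) := funext fun p => hΨ p.1 p.2
  have hvacuum : ‖coherentAmp α 0‖ ^ 2 = Real.exp (-‖α‖ ^ 2) := by
    simp [coherentAmp.norm_sq_apply]
  rw [hE, ← bellCorrelator, noonAmp.bellCorrelator_eq (coherentAmp.hasSum_norm_sq α), hvacuum]
end
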